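/- Let H = H₀ ⊕ H₁ be an orthogonal decomposition of a complex Hilbert space into closed subspaces and T ∈ L(H) with block components T_ij ∈ L(H_j,H_i). If Re T ≥ d for some d > 0, then Re T₁₁ ≥ d (in particular T₁₁ is boundedly invertible) and Re(T₀₀ − T₀₁T₁₁⁻¹T₁₀) ≥ d. -/

import Mathlib

/-!
Compressing the form `Re⟪T x, x⟫` to `H₁` gives `Re T₁₁ ≥ d`, and Lax–Milgram makes `T₁₁`
invertible. For `φ ∈ H₀` the vector `x = φ - T₁₁⁻¹T₁₀φ` satisfies `P₁Tx = 0` and `P₀Tx = Sφ` with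
`S` the Schur complement, so `Re⟪Sφ, φ⟫ = Re⟪Tx, x⟫ ≥ d‖x‖² ≥ d‖φ‖²`.
-/

noncomputable section
open Filter Topology ContinuousLinearMap

namespace Paper

/-- `Re S ≥ c` for a bounded operator on a complex Hilbert space:
`Re⟨Sφ,φ⟩ ≥ c‖φ‖²` for all `φ`. -/
def ReGE {K : Type*} [NormedAddCommGroup K] [InnerProductSpace ℂ K]
    (S : K →L[ℂ] K) (c : ℝ) : Prop :=
  ∀ φ : K, c * ‖φ‖ ^ 2 ≤ (inner ℂ (S φ) φ : ℂ).re

variable {H : Type*} [NormedAddCommGroup H] [InnerProductSpace ℂ H] [CompleteSpace H]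

/-- Block components of `M ∈ L(H)` w.r.t. the orthogonal decomposition `H = H₀ ⊕ H₀ᗮ`:
`M_ij = P_i ∘ M ∘ ι_j`. -/
def blk00 (H₀ : Submodule ℂ H) [CompleteSpace H₀] (M : H →L[ℂ] H) : H₀ →L[ℂ] H₀ :=
  H₀.orthogonalProjection ∘L M ∘L H₀.subtypeL

def blk01 (H₀ : Submodule ℂ H) [CompleteSpace H₀] (M : H →L[ℂ] H) : H₀ᗮ →L[ℂ] H₀ :=
  H₀.orthogonalProjection ∘L M ∘L H₀ᗮ.subtypeL

def blk10 (H₀ : Submodule ℂ H) [CompleteSpace H₀] (M : H →L[ℂ] H) : H₀ →L[ℂ] H₀ᗮ :=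
  H₀ᗮ.orthogonalProjection ∘L M ∘L H₀.subtypeL

def blk11 (H₀ : Submodule ℂ H) [CompleteSpace H₀] (M : H →L[ℂ] H) : H₀ᗮ →L[ℂ] H₀ᗮ :=
  H₀ᗮ.orthogonalProjection ∘L M ∘L H₀ᗮ.subtypeL

/-- `M₀₀⁻¹` (via `Ring.inverse`, which is the genuine inverse when `M₀₀` is invertible). -/
def schur00 (H₀ : Submodule ℂ H) [CompleteSpace H₀] (M : H →L[ℂ] H) : H₀ →L[ℂ] H₀ :=
  Ring.inverse (blk00 H₀ M)

/-- `M₁₀M₀₀⁻¹`. -/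
def schur10 (H₀ : Submodule ℂ H) [CompleteSpace H₀] (M : H →L[ℂ] H) : H₀ →L[ℂ] H₀ᗮ :=
  blk10 H₀ M ∘L schur00 H₀ M

/-- `M₀₀⁻¹M₀₁`. -/
def schur01 (H₀ : Submodule ℂ H) [CompleteSpace H₀] (M : H →L[ℂ] H) : H₀ᗮ →L[ℂ] H₀ :=
  schur00 H₀ M ∘L blk01 H₀ M

/-- `M₁₁ − M₁₀M₀₀⁻¹M₀₁`. -/
def schur11 (H₀ : Submodule ℂ H) [CompleteSpace H₀] (M : H →L[ℂ] H) : H₀ᗮ →L[ℂ] H₀ᗮ :=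
  blk11 H₀ M - blk10 H₀ M ∘L schur00 H₀ M ∘L blk01 H₀ M

/-- `M ∈ ℳ(H₀,H₁)`: both `M₀₀` and `M` are boundedly invertible. -/
def MemM (H₀ : Submodule ℂ H) [CompleteSpace H₀] (M : H →L[ℂ] H) : Prop :=
  IsUnit (blk00 H₀ M) ∧ IsUnit M

/-- `M ∈ ℳ(α)`. -/
def MemMa (H₀ : Submodule ℂ H) [CompleteSpace H₀] (a00 a01 a10 a11 : ℝ)
    (M : H →L[ℂ] H) : Prop :=
  MemM H₀ M ∧ ReGE (blk00 H₀ M) a00 ∧ ReGE (schur00 H₀ M) (1 / a11) ∧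
    ‖schur10 H₀ M‖ ≤ a10 ∧ ‖schur01 H₀ M‖ ≤ a01 ∧
    ReGE (schur11 H₀ M) a00 ∧ ReGE (Ring.inverse (schur11 H₀ M)) (1 / a11)

section Accretive

variable {E : Type*} [NormedAddCommGroup E] [InnerProductSpace ℂ E]

-- Lax–Milgram for the real coercive form `(u, v) ↦ Re⟪S u, v⟫`, whose Riesz representative is `S`.
theorem ReGE.isUnit [CompleteSpace E] {S : E →L[ℂ] E} {d : ℝ} (hd : 0 < d) (hS : ReGE S d) :
    IsUnit S := by
  let _ : InnerProductSpace ℝ E := InnerProductSpace.complexToReal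
  let B : E →L[ℝ] E →L[ℝ] ℝ := innerSL ℝ (E := E) ∘L S.restrictScalars ℝ
  have hB : IsCoercive B := ⟨d, hd, fun u => by
    rw [mul_assoc, ← sq]
    exact hS u⟩
  have hSB : ∀ v, hB.continuousLinearEquivOfBilin v = S v := fun v =>
    ext_inner_right ℝ fun w => hB.continuousLinearEquivOfBilin_apply v w
  refine isUnit_iff_bijective.mpr ?_
  simpa [funext hSB] using hB.continuousLinearEquivOfBilin.bijective

theorem ReGE.compression {T : E →L[ℂ] E} {d : ℝ} (hT : ReGE T d)
    (K : Submodule ℂ E) [K.HasOrthogonalProjection] :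
    ReGE (K.orthogonalProjectionOnto ∘L T ∘L K.subtypeL) d := fun φ => by
  simpa using hT φ

theorem inner_apply_self_eq_add_orthogonal (K : Submodule ℂ E) [K.HasOrthogonalProjection]
    (T : E →L[ℂ] E) (x : E) :
    inner ℂ (T x) x = inner ℂ (K.orthogonalProjectionOnto (T x)) (K.orthogonalProjectionOnto x)
      + inner ℂ (Kᗮ.orthogonalProjectionOnto (T x)) (Kᗮ.orthogonalProjectionOnto x) := by
  rw [Submodule.inner_orthogonalProjectionOnto_eq_of_mem_right,
    Submodule.inner_orthogonalProjectionOnto_eq_of_mem_right, ← inner_add_right,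
    ← Submodule.starProjection_apply, ← Submodule.starProjection_apply,
    Submodule.starProjection_add_starProjection_orthogonal]

end Accretive

omit [CompleteSpace H] in
theorem reGE_schurComplement_blk11 (H₀ : Submodule ℂ H) [CompleteSpace H₀] {T : H →L[ℂ] H}
    {d : ℝ} (hd : 0 ≤ d) (hT : ReGE T d) (h11 : IsUnit (blk11 H₀ T)) :
    ReGE (blk00 H₀ T - blk01 H₀ T ∘L Ring.inverse (blk11 H₀ T) ∘L blk10 H₀ T) d := by
  intro φ
  set ψ := Ring.inverse (blk11 H₀ T) (blk10 H₀ T φ) with hψ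
  set x : H := φ - ψ
  have hx₀ : H₀.orthogonalProjectionOnto x = φ := by simp [x]
  have hTx₁ : H₀ᗮ.orthogonalProjectionOnto (T x) = 0 := by
    have : blk11 H₀ T ψ = blk10 H₀ T φ := by
      rw [hψ, ← mul_apply_eq_comp, Ring.mul_inverse_cancel _ h11, one_apply_eq_self]
    simpa [x, sub_eq_zero, blk10, blk11] using this.symm
  have hTx₀ : H₀.orthogonalProjectionOnto (T x) =
      (blk00 H₀ T - blk01 H₀ T ∘L Ring.inverse (blk11 H₀ T) ∘L blk10 H₀ T) φ := by
    simp [x, ψ, blk00, blk01]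
  calc d * ‖φ‖ ^ 2 ≤ d * ‖x‖ ^ 2 := by
        gcongr
        simpa [hx₀] using H₀.norm_orthogonalProjectionOnto_apply_le x
    _ ≤ (inner ℂ (T x) x).re := hT x
    _ = _ := by rw [inner_apply_self_eq_add_orthogonal H₀, hx₀, hTx₀, hTx₁]; simp

/-- If `Re T ≥ d > 0` then `Re T₁₁ ≥ d` (so `T₁₁` is boundedly
invertible) and `Re (T₀₀ − T₀₁T₁₁⁻¹T₁₀) ≥ d`. -/
theorem statement_18 (H₀ : Submodule ℂ H) [CompleteSpace H₀]
    (T : H →L[ℂ] H) (d : ℝ) (hd : 0 < d) (hT : ReGE T d) :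
    ReGE (blk11 H₀ T) d ∧ IsUnit (blk11 H₀ T) ∧
    ReGE (blk00 H₀ T - blk01 H₀ T ∘L Ring.inverse (blk11 H₀ T) ∘L blk10 H₀ T) d := by
  have h11 : ReGE (blk11 H₀ T) d := hT.compression H₀ᗮ
  have hunit : IsUnit (blk11 H₀ T) := h11.isUnit hd
  exact ⟨h11, hunit, reGE_schurComplement_blk11 H₀ hd.le hT hunit⟩

end Paper
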